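/- Unsoundness of the full-information game beyond ∀*∃*: there exists a finite Kripke structure K and an ∃∀ HyperLTL formula φ = ∃π₁.∀π₂.((XXX a_{π₁}) ↔ (XX a_{π₂})) such that K ⊭ φ, yet in the naive two-player full-information game (where the player for π₁ observes the current state of the π₂-copy) the existential player has a winning strategy. -/
import Mathlib


/-- Syntax of LTL formulas over atomic propositions `α` (with a primitive
`true` constant). -/
inductive LTL (α : Type) where
  | tt : LTL α
  | atom : α → LTL α
  | conj : LTL α → LTL α → LTL α
  | neg : LTL α → LTL α
  | next : LTL α → LTL α
  | untl : LTL α → LTL α → LTL α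

/-- Satisfaction of an LTL formula on a trace `t : ℕ → Set α` at position `i`. -/
def LTL.sat {α : Type} (t : ℕ → Set α) : ℕ → LTL α → Prop
  | _, .tt => True
  | i, .atom a => a ∈ t i
  | i, .conj φ ψ => LTL.sat t i φ ∧ LTL.sat t i ψ
  | i, .neg φ => ¬ LTL.sat t i φ
  | i, .next φ => LTL.sat t (i + 1) φ
  | i, .untl φ ψ =>
      ∃ k, i ≤ k ∧ LTL.sat t k ψ ∧ ∀ j, i ≤ j → j < k → LTL.sat t j φ

/-- Paths of a Kripke structure. -/
def IsKPath {St D : Type} (init : St) (κ : St → D → St) (τ : ℕ → St) : Prop :=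
  τ 0 = init ∧ ∀ i, ∃ d : D, τ (i + 1) = κ (τ i) d

/-- The trace set of a Kripke structure. -/
def KTraces {St D α : Type} (init : St) (κ : St → D → St) (ℓ : St → Set α) :
    Set (ℕ → Set α) :=
  {t | ∃ τ : ℕ → St, IsKPath init κ τ ∧ ∀ i, t i = ℓ (τ i)}

/-- Combine a list of `n` traces (for trace variables `π₁, …, π_n`, in order)
into one trace over variable-indexed atomic propositions `α × Fin n`. -/
def zipTraces {α : Type} (n : ℕ) (ts : List (ℕ → Set α)) : ℕ → Set (α × Fin n) :=
  fun k => {x | x.1 ∈ ts.getD x.2.val (fun _ => (∅ : Set α)) k}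

def LTL.ev {α : Type} (ψ : LTL α) : LTL α := .untl .tt ψ
def LTL.imp {α : Type} (φ ψ : LTL α) : LTL α := .neg (.conj φ (.neg ψ))
def LTL.biimp {α : Type} (φ ψ : LTL α) : LTL α := .conj (φ.imp ψ) (ψ.imp φ)

/-- The Kripke structure of Fig. 1: states `0 = s_init`, `1 = s_A`, `2 = s_B`;
from `s_init` one moves to `s_A`; from `s_A` and `s_B` one can move to either
`s_A` or `s_B` (direction `true` = go to `s_B`). -/
def exK : Fin 3 → Bool → Fin 3 := fun s b =>
  if s = 0 then 1 else if b then 2 else 1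

/-- Labeling over `AP = {a}` (modeled as `Unit`): `a` holds exactly in
`s_B = 2`. -/
def exL : Fin 3 → Set Unit := fun s => if s = 2 then {()} else ∅

/-- The LTL body `(X X X a_{π₁}) ↔ (X X a_{π₂})` of
`φ = ∃π₁.∀π₂.((XXX a_{π₁}) ↔ (XX a_{π₂}))`. -/
def exBody : LTL (Unit × Fin 2) :=
  LTL.biimp (.next (.next (.next (.atom ((), 0)))))
    (.next (.next (.atom ((), 1))))

/-- The path of a Kripke structure following a fixed direction sequence. -/
def pathOf {St D : Type} (init : St) (κ : St → D → St) (ds : ℕ → D) : ℕ → St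
  | 0 => init
  | i + 1 => κ (pathOf init κ ds i) (ds i)

lemma mem_zip0 (t₁ t₂ : ℕ → Set Unit) (k : ℕ) :
    (((), (0 : Fin 2)) ∈ zipTraces 2 [t₁, t₂] k) ↔ () ∈ t₁ k := by
  simp [zipTraces]

lemma mem_zip1 (t₁ t₂ : ℕ → Set Unit) (k : ℕ) :
    (((), (1 : Fin 2)) ∈ zipTraces 2 [t₁, t₂] k) ↔ () ∈ t₂ k := by
  simp [zipTraces]

lemma sat_exBody (t₁ t₂ : ℕ → Set Unit) :
    LTL.sat (zipTraces 2 [t₁, t₂]) 0 exBody ↔ (() ∈ t₁ 3 ↔ () ∈ t₂ 2) := by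
  simp only [exBody, LTL.biimp, LTL.imp, LTL.sat, mem_zip0, mem_zip1]
  tauto

theorem full_information_unsound' :
    (¬ ∃ t₁ ∈ KTraces (0 : Fin 3) exK exL, ∀ t₂ ∈ KTraces (0 : Fin 3) exK exL,
        LTL.sat (zipTraces 2 [t₁, t₂]) 0 exBody) ∧
    (∃ σV : List Bool → Bool, ∀ dR : ℕ → Bool,
        LTL.sat
          (zipTraces 2
            [fun i =>
              exL (pathOf 0 exK (fun j => σV ((List.range (j + 1)).map dR)) i),
             fun i => exL (pathOf 0 exK dR i)])
          0 exBody) := by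
  constructor
  · rintro ⟨t₁, _ht₁, h⟩
    by_cases hb : () ∈ t₁ 3
    · set ds : ℕ → Bool := fun _ => false with hds
      have := h (fun i => exL (pathOf 0 exK ds i))
        ⟨pathOf 0 exK ds, ⟨rfl, fun i => ⟨ds i, rfl⟩⟩, fun _ => rfl⟩
      rw [sat_exBody] at this
      have h2 : () ∈ exL (pathOf 0 exK ds 2) := this.mp hb
      simp [pathOf, exK, exL, ds] at h2
    · set ds : ℕ → Bool := fun j => j = 1 with hds
      have := h (fun i => exL (pathOf 0 exK ds i))
        ⟨pathOf 0 exK ds, ⟨rfl, fun i => ⟨ds i, rfl⟩⟩, fun _ => rfl⟩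
      rw [sat_exBody] at this
      have h2 : () ∈ exL (pathOf 0 exK ds 2) := by
        simp [pathOf, exK, exL, ds]
      exact hb (this.mpr h2)
  · refine ⟨fun l => l.getD 1 false, fun dR => ?_⟩
    rw [sat_exBody]
    have hV : (fun j => ((List.range (j + 1)).map dR).getD 1 false) 2 = dR 1 := by
      simp [List.range_succ]
    show () ∈ exL (pathOf 0 exK _ 3) ↔ () ∈ exL (pathOf 0 exK dR 2)
    simp only [pathOf, hV]
    cases h0 : dR 0 <;> cases h1 : dR 1 <;>
      simp [exK, exL, List.range_succ, h0, h1]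

/-- unsoundness of the full-information game beyond `∀*∃*`:
`K ⊭ ∃π₁.∀π₂.((XXX a_{π₁}) ↔ (XX a_{π₂}))`, yet in the naive two-player
full-information game — in each round the refuter first extends the `π₂`-path
and then the verifier extends the `π₁`-path having observed the full game
state (in particular all of the refuter's directions so far) — the verifier
(existential player) has a winning strategy. -/
theorem full_information_unsound :
    (¬ ∃ t₁ ∈ KTraces (0 : Fin 3) exK exL, ∀ t₂ ∈ KTraces (0 : Fin 3) exK exL,
        LTL.sat (zipTraces 2 [t₁, t₂]) 0 exBody) ∧
    (∃ σV : List Bool → Bool, ∀ dR : ℕ → Bool,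
        LTL.sat
          (zipTraces 2
            [fun i =>
              exL (pathOf 0 exK (fun j => σV ((List.range (j + 1)).map dR)) i),
             fun i => exL (pathOf 0 exK dR i)])
          0 exBody) := by
  exact full_information_unsound'
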